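/- arXiv:math-ph/0406065 — 4 statements merged into one kernel-verified Lean document; each statement's English description precedes it below -/
import Mathlib

section
/- Let $n \ge 1$ and let $H, P$ be Hermitian $n \times n$ complex matrices. Then $\left| \log \operatorname{tr}\left( e^{H+P} \right) - \log \operatorname{tr}\left( e^{H} \right) \right| \le \| P \|$. -/
/-!
Let `u i` be an orthonormal eigenbasis of `H + P`, with eigenvalues `μ i`. Then
`μ i = ⟨u i, H u i⟩ + ⟨u i, P u i⟩ ≤ ⟨u i, H u i⟩ + ‖P‖`, and Jensen's inequality for `exp`,
applied in an eigenbasis of `H` (the weights are the squared coordinates of the unit vector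
`u i`), gives `exp ⟨u i, H u i⟩ ≤ ⟨u i, e^H u i⟩`. Summing over `i`,
`tr e^(H+P) = ∑ exp (μ i) ≤ e^‖P‖ ∑ ⟨u i, e^H u i⟩ = e^‖P‖ tr e^H`.
The same bound for `H + P` perturbed by `-P` gives the reverse inequality.
-/

open scoped Matrix.Norms.L2Operator

namespace Matrix

open NormedSpace RCLike

variable {𝕜 ι : Type*} [RCLike 𝕜] [Fintype ι]

theorem trace_toLpLin [DecidableEq ι] {R : Type*} [CommRing R] (p : ENNReal)
    (M : Matrix ι ι R) :
    LinearMap.trace R _ (toLpLin p p M) = M.trace := by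
  rw [toLpLin_eq_toLin, LinearMap.trace_eq_matrix_trace _ (PiLp.basisFun p R ι),
    LinearMap.toMatrix_toLin]

theorem star_dotProduct_mulVec_eq_inner [DecidableEq ι] (M : Matrix ι ι 𝕜)
    (x y : EuclideanSpace 𝕜 ι) :
    star ⇑x ⬝ᵥ (M *ᵥ ⇑y) = inner 𝕜 x (toLpLin 2 2 M y) :=
  dotProduct_comm _ _

theorem trace_eq_sum_star_dotProduct_mulVec (M : Matrix ι ι 𝕜)
    (b : OrthonormalBasis ι 𝕜 (EuclideanSpace 𝕜 ι)) :
    M.trace = ∑ i, star ⇑(b i) ⬝ᵥ (M *ᵥ ⇑(b i)) := by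
  classical
  rw [← trace_toLpLin, LinearMap.trace_eq_sum_inner _ b]
  simp only [star_dotProduct_mulVec_eq_inner]

variable [DecidableEq ι]

theorem re_star_dotProduct_mulVec_le_l2_opNorm (M : Matrix ι ι 𝕜) (x : EuclideanSpace 𝕜 ι) :
    re (star ⇑x ⬝ᵥ (M *ᵥ ⇑x)) ≤ ‖M‖ * ‖x‖ ^ 2 :=
  calc re (star ⇑x ⬝ᵥ (M *ᵥ ⇑x)) ≤ ‖inner 𝕜 x (toLpLin 2 2 M x)‖ := by
        rw [star_dotProduct_mulVec_eq_inner]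
        exact re_le_norm _
    _ ≤ ‖x‖ * ‖toLpLin 2 2 M x‖ := norm_inner_le_norm _ _
    _ ≤ ‖x‖ * (‖M‖ * ‖x‖) := by gcongr; exact l2_opNorm_mulVec M x
    _ = ‖M‖ * ‖x‖ ^ 2 := by ring

theorem exp_conjStarAlgAut (U : unitaryGroup ι 𝕜) (A : Matrix ι ι 𝕜) :
    exp (Unitary.conjStarAlgAut 𝕜 _ U A) = Unitary.conjStarAlgAut 𝕜 _ U (exp A) := by
  simpa using exp_units_conj (Unitary.toUnits U) A

theorem star_dotProduct_conjStarAlgAut_mulVec (U : unitaryGroup ι 𝕜) (M : Matrix ι ι 𝕜)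
    (x : ι → 𝕜) :
    star x ⬝ᵥ (Unitary.conjStarAlgAut 𝕜 _ U M *ᵥ x) =
      star (star (U : Matrix ι ι 𝕜) *ᵥ x) ⬝ᵥ (M *ᵥ (star (U : Matrix ι ι 𝕜) *ᵥ x)) := by
  rw [Unitary.conjStarAlgAut_apply, ← mulVec_mulVec, ← mulVec_mulVec, dotProduct_mulVec,
    star_mulVec, star_eq_conjTranspose, conjTranspose_conjTranspose]

theorem re_star_dotProduct_diagonal_mulVec (d : ι → ℝ) (y : ι → 𝕜) :
    re (star y ⬝ᵥ (diagonal (ofReal ∘ d) *ᵥ y)) = ∑ j, d j * ‖y j‖ ^ 2 := by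
  simp [dotProduct, mulVec_diagonal, mul_left_comm _ (d _ : 𝕜), RCLike.conj_mul]

theorem sum_norm_sq_star_mulVec (U : unitaryGroup ι 𝕜) (x : EuclideanSpace 𝕜 ι) :
    ∑ j, ‖(star (U : Matrix ι ι 𝕜) *ᵥ x) j‖ ^ 2 = ‖x‖ ^ 2 := by
  have h := (re_star_dotProduct_diagonal_mulVec 1 (star (U : Matrix ι ι 𝕜) *ᵥ x)).symm
  rw [← star_dotProduct_conjStarAlgAut_mulVec] at h
  simp only [Pi.one_apply, one_mul, Pi.comp_one, map_one, Function.const_one, diagonal_one',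
    one_mulVec] at h
  rw [h, norm_sq_eq_re_inner (𝕜 := 𝕜), EuclideanSpace.inner_eq_star_dotProduct, dotProduct_comm]

namespace IsHermitian

variable {A : Matrix ι ι 𝕜}

theorem cfc_id (hA : A.IsHermitian) : hA.cfc id = A :=
  hA.spectral_theorem.symm

theorem exp_eq_cfc (hA : A.IsHermitian) : NormedSpace.exp A = hA.cfc Real.exp := by
  conv_lhs => rw [hA.spectral_theorem]
  rw [IsHermitian.cfc, exp_conjStarAlgAut, exp_diagonal]
  congr
  ext i
  simp [Real.exp_eq_exp_ℝ, ← map_exp (algebraMap ℝ 𝕜) (continuous_algebraMap ℝ 𝕜)]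

theorem trace_cfc (hA : A.IsHermitian) (f : ℝ → ℝ) :
    (hA.cfc f).trace = ∑ i, (f (hA.eigenvalues i) : 𝕜) := by
  rw [IsHermitian.cfc, Unitary.conjStarAlgAut_apply, trace_mul_cycle, Unitary.coe_star_mul_self,
    one_mul, trace_diagonal]
  rfl

theorem re_trace_exp (hA : A.IsHermitian) :
    re (NormedSpace.exp A).trace = ∑ i, Real.exp (hA.eigenvalues i) := by
  rw [hA.exp_eq_cfc, hA.trace_cfc, map_sum]
  simp only [ofReal_re]

theorem re_trace_exp_pos [Nonempty ι] (hA : A.IsHermitian) : 0 < re (NormedSpace.exp A).trace := by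
  rw [hA.re_trace_exp]
  exact Finset.sum_pos (fun i _ ↦ Real.exp_pos _) Finset.univ_nonempty

theorem re_star_dotProduct_cfc_mulVec (hA : A.IsHermitian) (f : ℝ → ℝ) (x : ι → 𝕜) :
    re (star x ⬝ᵥ (hA.cfc f *ᵥ x)) =
      ∑ j, f (hA.eigenvalues j) * ‖(star (hA.eigenvectorUnitary : Matrix ι ι 𝕜) *ᵥ x) j‖ ^ 2 := by
  rw [IsHermitian.cfc, star_dotProduct_conjStarAlgAut_mulVec, re_star_dotProduct_diagonal_mulVec]
  rfl

end IsHermitian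

theorem _root_.ConvexOn.map_re_star_dotProduct_mulVec_le_cfc {f : ℝ → ℝ}
    (hf : ConvexOn ℝ Set.univ f) {A : Matrix ι ι 𝕜} (hA : A.IsHermitian)
    {x : EuclideanSpace 𝕜 ι} (hx : ‖x‖ = 1) :
    f (re (star ⇑x ⬝ᵥ (A *ᵥ ⇑x))) ≤ re (star ⇑x ⬝ᵥ (hA.cfc f *ᵥ ⇑x)) := by
  set w := fun j ↦ ‖(star (hA.eigenvectorUnitary : Matrix ι ι 𝕜) *ᵥ x) j‖ ^ 2
  have hw : ∑ j, w j = 1 := by rw [sum_norm_sq_star_mulVec, hx, one_pow]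
  have hA_quad := hA.re_star_dotProduct_cfc_mulVec id x
  rw [hA.cfc_id] at hA_quad
  rw [hA_quad, hA.re_star_dotProduct_cfc_mulVec]
  simpa [mul_comm] using hf.map_sum_le (t := Finset.univ) (p := hA.eigenvalues)
    (fun j _ ↦ sq_nonneg _) hw (fun j _ ↦ Set.mem_univ _)

theorem re_trace_exp_add_le {A B : Matrix ι ι 𝕜} (hA : A.IsHermitian) (hB : B.IsHermitian) :
    re (exp (A + B)).trace ≤ Real.exp ‖B‖ * re (exp A).trace := by
  have hAB := hA.add hB
  set u := hAB.eigenvectorBasis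
  rw [hAB.re_trace_exp, trace_eq_sum_star_dotProduct_mulVec _ u, map_sum, Finset.mul_sum]
  gcongr with i
  have hu : ‖u i‖ = 1 := u.orthonormal.1 i
  have hμ : hAB.eigenvalues i =
      re (star ⇑(u i) ⬝ᵥ (A *ᵥ ⇑(u i))) + re (star ⇑(u i) ⬝ᵥ (B *ᵥ ⇑(u i))) := by
    rw [hAB.eigenvalues_eq, add_mulVec, dotProduct_add, map_add]
  have hB_le : re (star ⇑(u i) ⬝ᵥ (B *ᵥ ⇑(u i))) ≤ ‖B‖ := by
    simpa [hu] using re_star_dotProduct_mulVec_le_l2_opNorm B (u i)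
  have hA_le : Real.exp (re (star ⇑(u i) ⬝ᵥ (A *ᵥ ⇑(u i)))) ≤
      re (star ⇑(u i) ⬝ᵥ (exp A *ᵥ ⇑(u i))) := by
    rw [hA.exp_eq_cfc]
    exact convexOn_exp.map_re_star_dotProduct_mulVec_le_cfc hA hu
  calc Real.exp (hAB.eigenvalues i)
      = Real.exp (re (star ⇑(u i) ⬝ᵥ (A *ᵥ ⇑(u i)))) *
          Real.exp (re (star ⇑(u i) ⬝ᵥ (B *ᵥ ⇑(u i)))) := by rw [hμ, Real.exp_add]
    _ ≤ re (star ⇑(u i) ⬝ᵥ (exp A *ᵥ ⇑(u i))) * Real.exp ‖B‖ := by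
        gcongr
        exact (Real.exp_pos _).le.trans hA_le
    _ = Real.exp ‖B‖ * re (star ⇑(u i) ⬝ᵥ (exp A *ᵥ ⇑(u i))) := mul_comm _ _

end Matrix

theorem Real.abs_log_sub_log_le_of_le_exp_mul {a b p : ℝ} (ha : 0 < a) (hb : 0 < b)
    (hab : a ≤ exp p * b) (hba : b ≤ exp p * a) : |log a - log b| ≤ p := by
  rw [abs_sub_le_iff, ← log_div ha.ne' hb.ne', ← log_div hb.ne' ha.ne',
    log_le_iff_le_exp (div_pos ha hb), log_le_iff_le_exp (div_pos hb ha),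
    div_le_iff₀ hb, div_le_iff₀ ha]
  exact ⟨hab, hba⟩

/-- **Part 1 of Lemma 3.3**: for Hermitian `n × n` complex matrices `H, P` (with `n ≥ 1`),
`|log tr(e^{H+P}) - log tr(e^H)| ≤ ‖P‖`, where `‖·‖` is the operator norm on `ℂ^n`. -/
theorem log_trace_exp_perturb_bound {n : ℕ} (hn : 1 ≤ n)
    (H P : Matrix (Fin n) (Fin n) ℂ) (hH : H.IsHermitian) (hP : P.IsHermitian) :
    |Real.log (Matrix.trace (NormedSpace.exp (H + P))).re -
      Real.log (Matrix.trace (NormedSpace.exp H)).re| ≤ ‖P‖ := by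
  have : Nonempty (Fin n) := ⟨⟨0, hn⟩⟩
  have hHP : (H + P).IsHermitian := hH.add hP
  refine Real.abs_log_sub_log_le_of_le_exp_mul hHP.re_trace_exp_pos hH.re_trace_exp_pos
    (Matrix.re_trace_exp_add_le hH hP) ?_
  simpa using Matrix.re_trace_exp_add_le hHP hP.neg
end

section
/- Let $n \ge 1$ and let $H, P$ be Hermitian $n \times n$ complex matrices. Then the function $t \mapsto \log \operatorname{tr}\left( e^{H+tP} \right)$ is differentiable on $\mathbb{R}$, and for every $t \in \mathbb{R}$ its derivative equals $\operatorname{tr}\left( P \, e^{H+tP} \right) / \operatorname{tr}\left( e^{H+tP} \right)$. -/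
/-!
Expand `tr e^{H+tP} = ∑ₖ tr((H+tP)^k)/k!`. Although `H` and `P` need not commute, cyclicity of
the trace collapses the `k` terms of the derivative of `(H+tP)^k` into `k · tr(P (H+tP)^(k-1))`,
so the termwise derivatives sum to `tr(P e^{H+tP})`; they are bounded by a summable sequence
on `|s - t| < 1`, which justifies differentiating term by term. Finally
`e^M = (e^{M/2})ᴴ e^{M/2}` is positive definite for Hermitian `M`, so the trace is positive and
the chain rule for `log` applies.
-/

open NormedSpace Matrix Finset
open scoped Nat ComplexOrder

theorem norm_mul_pow_le {R : Type*} [SeminormedRing R] (a b : R) :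
    ∀ n : ℕ, ‖a * b ^ n‖ ≤ ‖a‖ * ‖b‖ ^ n
  | 0 => by simp
  | n + 1 => calc
      ‖a * b ^ (n + 1)‖ = ‖a * b ^ n * b‖ := by rw [pow_succ, mul_assoc]
      _ ≤ ‖a * b ^ n‖ * ‖b‖ := norm_mul_le _ _
      _ ≤ ‖a‖ * ‖b‖ ^ n * ‖b‖ := by gcongr; exact norm_mul_pow_le a b n
      _ = ‖a‖ * ‖b‖ ^ (n + 1) := by ring

theorem norm_add_smul_le_of_mem_ball {𝕜 E : Type*} [NormedField 𝕜] [SeminormedAddCommGroup E]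
    [NormedSpace 𝕜 E] (a b : E) {s t : 𝕜} {r : ℝ} (hs : s ∈ Metric.ball t r) :
    ‖a + s • b‖ ≤ ‖a‖ + (‖t‖ + r) * ‖b‖ := by
  have hs' : ‖s‖ ≤ ‖t‖ + r := by
    have := norm_le_norm_add_norm_sub' s t
    rw [mem_ball_iff_norm] at hs
    linarith
  calc ‖a + s • b‖ ≤ ‖a‖ + ‖s‖ * ‖b‖ := (norm_add_le _ _).trans_eq (by rw [norm_smul])
    _ ≤ ‖a‖ + (‖t‖ + r) * ‖b‖ := by gcongr

theorem factorial_inv_smul_nsmul_succ {𝕜 E : Type*} [Field 𝕜] [CharZero 𝕜] [AddCommGroup E]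
    [Module 𝕜 E] (k : ℕ) (v : E) :
    (((k + 1)! : 𝕜)⁻¹) • ((k + 1) • v) = ((k ! : 𝕜)⁻¹) • v := by
  rw [← Nat.cast_smul_eq_nsmul 𝕜, smul_smul, Nat.factorial_succ, Nat.cast_mul, Nat.cast_succ,
    mul_inv, mul_right_comm, inv_mul_cancel₀ k.cast_add_one_ne_zero, one_mul]

section CyclicFunctional

variable {𝕜 𝔸 E : Type*} [RCLike 𝕜] [NormedRing 𝔸] [NormedAlgebra 𝕜 𝔸]
  [NormedAddCommGroup E] [NormedSpace 𝕜 E] (T : 𝔸 →L[𝕜] E) (hT : ∀ x y, T (x * y) = T (y * x))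
include hT

theorem map_sum_pow_mul_mul_pow (X B : 𝔸) (k : ℕ) :
    T (∑ i ∈ range k, X ^ (k.pred - i) * B * X ^ i) = k • T (B * X ^ k.pred) := by
  have hterm : ∀ i ∈ range k, T (X ^ (k.pred - i) * B * X ^ i) = T (B * X ^ k.pred) :=
    fun i hi => by
      rw [mul_assoc, hT, mul_assoc, ← pow_add,
        Nat.add_sub_cancel' (Nat.le_pred_of_lt (mem_range.mp hi))]
  rw [map_sum, sum_congr rfl hterm, sum_const, card_range]

theorem hasDerivAt_map_pow_add_smul (A B : 𝔸) (k : ℕ) (t : 𝕜) :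
    HasDerivAt (fun s : 𝕜 => T ((A + s • B) ^ k)) (k • T (B * (A + t • B) ^ k.pred)) t := by
  have hline : HasDerivAt (fun s : 𝕜 => A + s • B) B t := by
    simpa using ((hasDerivAt_id t).smul_const B).const_add A
  have hpow := (hline.hasFDerivAt.pow' k).hasDerivAt
  rw [← map_sum_pow_mul_mul_pow T hT]
  refine (T.hasFDerivAt.comp_hasDerivAt t hpow).congr_deriv ?_
  rw [_root_.sum_apply]
  simp

theorem hasDerivAt_map_exp_add_smul [CompleteSpace 𝔸] [CompleteSpace E] (A B : 𝔸) (t : 𝕜) :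
    HasDerivAt (fun s : 𝕜 => T (exp (A + s • B))) (T (B * exp (A + t • B))) t := by
  set g : ℕ → 𝕜 → E := fun k s => (k ! : 𝕜)⁻¹ • T ((A + s • B) ^ k)
  set g' : ℕ → 𝕜 → E := fun k s => (k ! : 𝕜)⁻¹ • (k • T (B * (A + s • B) ^ k.pred))
  have hg (k : ℕ) (s : 𝕜) : HasDerivAt (g k) (g' k s) s :=
    (hasDerivAt_map_pow_add_smul T hT A B k s).const_smul _
  have hg_sum (s : 𝕜) : HasSum (g · s) (T (exp (A + s • B))) := by
    simpa only [map_smul] using (exp_series_hasSum_exp' (𝕂 := 𝕜) (A + s • B)).mapL T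
  have hg'_sum : HasSum (g' · t) (T (B * exp (A + t • B))) := by
    rw [← hasSum_nat_add_iff' 1]
    simpa [g', factorial_inv_smul_nsmul_succ] using
      (exp_series_hasSum_exp' (𝕂 := 𝕜) (A + t • B)).mapL (T ∘L .mul 𝕜 𝔸 B)
  set R := ‖A‖ + (‖t‖ + 1) * ‖B‖
  set u : ℕ → ℝ := fun k => ‖T‖ * ‖B‖ * (R ^ k.pred / k.pred !)
  have hu : Summable u := by
    rw [← summable_nat_add_iff 1]
    exact (Real.summable_pow_div_factorial R).mul_left _
  have hg'_le (k : ℕ) (s : 𝕜) (hs : s ∈ Metric.ball t 1) : ‖g' k s‖ ≤ u k := by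
    rcases k with _ | k
    · simp only [g', zero_nsmul, smul_zero, norm_zero]
      positivity
    · have hX : ‖A + s • B‖ ≤ R := norm_add_smul_le_of_mem_ball A B hs
      simp only [g', u, factorial_inv_smul_nsmul_succ, norm_smul, norm_inv, RCLike.norm_natCast,
        Nat.pred_succ]
      calc (k ! : ℝ)⁻¹ * ‖T (B * (A + s • B) ^ k)‖
          ≤ (k ! : ℝ)⁻¹ * (‖T‖ * (‖B‖ * R ^ k)) := by
            gcongr
            refine (T.le_opNorm _).trans ?_
            gcongr
            exact (norm_mul_pow_le _ _ k).trans (by gcongr)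
        _ = ‖T‖ * ‖B‖ * (R ^ k / k !) := by ring
  have := hasDerivAt_tsum_of_isPreconnected hu Metric.isOpen_ball (convex_ball t 1).isPreconnected
    (fun k s _ => hg k s) hg'_le (Metric.mem_ball_self one_pos) (hg_sum t).summable
    (Metric.mem_ball_self one_pos)
  simpa only [funext fun s => (hg_sum s).tsum_eq, hg'_sum.tsum_eq] using this

end CyclicFunctional

open scoped Matrix.Norms.Operator in
theorem Matrix.hasDerivAt_trace_exp_add_smul {m 𝕜 : Type*} [Fintype m] [DecidableEq m] [RCLike 𝕜]
    (A B : Matrix m m 𝕜) (t : ℝ) :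
    HasDerivAt (fun s : ℝ => trace (exp (A + s • B))) (trace (B * exp (A + t • B))) t :=
  hasDerivAt_map_exp_add_smul (LinearMap.toContinuousLinearMap (traceLinearMap m ℝ 𝕜))
    trace_mul_comm A B t

theorem Matrix.IsHermitian.posDef_exp {m 𝕜 : Type*} [Fintype m] [DecidableEq m] [RCLike 𝕜]
    {A : Matrix m m 𝕜} (hA : A.IsHermitian) : (NormedSpace.exp A).PosDef := by
  set B := NormedSpace.exp ((2⁻¹ : ℝ) • A)
  have hB : B.IsHermitian := (IsSelfAdjoint.all (2⁻¹ : ℝ) |>.smul hA).exp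
  have hsq : NormedSpace.exp A = Bᴴ * B := by
    rw [hB.eq, ← Matrix.exp_add_of_commute _ _ (Commute.refl _), ← add_smul]
    norm_num
  rw [hsq]
  exact .conjTranspose_mul_self B (mulVec_injective_iff_isUnit.mpr (isUnit_exp _))

/-- For Hermitian `H, P`, the function `t ↦ log tr(e^{H+tP})` is differentiable on `ℝ`
with derivative `tr(P e^{H+tP}) / tr(e^{H+tP})` at every `t`. -/
theorem hasDerivAt_log_trace_exp {n : ℕ} (hn : 1 ≤ n)
    (H P : Matrix (Fin n) (Fin n) ℂ) (hH : H.IsHermitian) (hP : P.IsHermitian) (t : ℝ) :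
    HasDerivAt (fun t : ℝ => Real.log (Matrix.trace (NormedSpace.exp (H + t • P))).re)
      ((Matrix.trace (P * NormedSpace.exp (H + t • P))).re /
        (Matrix.trace (NormedSpace.exp (H + t • P))).re) t := by
  have : Nonempty (Fin n) := ⟨⟨0, hn⟩⟩
  have hHt : (H + t • P).IsHermitian := hH.add ((IsSelfAdjoint.all t).smul hP)
  have hpos : 0 < (trace (exp (H + t • P))).re :=
    (Complex.pos_iff.mp hHt.posDef_exp.trace_pos).1
  have hderiv :=
    Complex.reCLM.hasFDerivAt.comp_hasDerivAt t (hasDerivAt_trace_exp_add_smul H P t)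
  exact hderiv.log hpos.ne'
end

section
/- Let $n \ge 1$, let $H, P$ be Hermitian $n \times n$ complex matrices, and let $C$ be a positive definite $n \times n$ complex matrix. Then for every $t \in \mathbb{R}$, the derivative of the function $t \mapsto \log \operatorname{tr}\left( C e^{H+tP} \right)$ at $t$ satisfies $\left| \frac{d}{dt} \log \operatorname{tr}\left( C e^{H+tP} \right) \right| \le \sup_{-1/2 \le s \le 1/2} \left\| e^{-s(H+tP)} \, P \, e^{s(H+tP)} \right\|$. -/
/-!
Write `A = H + tP` and `g u = re tr (C e^{H+uP})`. Duhamel's formula gives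
`g' t = ∫₀¹ re tr (C e^{sA} P e^{(1-s)A}) ds`. With the Hermitian square root `B = e^{A/2}` of
`e^A`, the integrand is `re tr (B C B X_s)` where `X_s = e^{(s-1/2)A} P e^{(1/2-s)A}`, and for the
positive semidefinite `B C B` one has `|tr (B C B X)| ≤ ‖X‖ tr (B C B) = ‖X‖ g t`. Hence
`|g' t| ≤ g t · sup_s ‖X_s‖`, and `g t > 0` because `B C B` is positive definite.
-/

open scoped Matrix.Norms.L2Operator ComplexOrder

open NormedSpace

section Calculus

variable {𝕜 F : Type*} [NontriviallyNormedField 𝕜] [NormedAddCommGroup F] [NormedSpace 𝕜 F]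

theorem hasDerivAt_of_sub_eq_smul {f G : 𝕜 → F} {x : 𝕜} (hG : ContinuousAt G x)
    (hfG : ∀ y, f y - f x = (y - x) • G y) : HasDerivAt f (G x) x := by
  rw [hasDerivAt_iff_tendsto_slope]
  refine (hG.tendsto.mono_left nhdsWithin_le_nhds).congr' ?_
  filter_upwards [self_mem_nhdsWithin] with y hy
  rw [slope_def_module, hfG, smul_smul, inv_mul_cancel₀ (sub_ne_zero.2 hy), one_smul]

end Calculus

section BanachAlgebra

variable {𝔸 : Type*} [NormedRing 𝔸] [NormedAlgebra ℝ 𝔸] [CompleteSpace 𝔸]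

theorem continuous_exp_of_real : Continuous (exp : 𝔸 → 𝔸) :=
  continuous_iff_continuousAt.2 fun x => (exp_analytic (𝕂 := ℝ) x).continuousAt

theorem exp_add_smul (A : 𝔸) (a b : ℝ) : exp ((a + b) • A) = exp (a • A) * exp (b • A) := by
  let _ : NormedAlgebra ℚ 𝔸 := .restrictScalars ℚ ℝ 𝔸
  rw [add_smul, exp_add_of_commute (((Commute.refl A).smul_left a).smul_right b)]

theorem exp_half_smul_mul_self (A : 𝔸) : exp ((1 / 2 : ℝ) • A) * exp ((1 / 2 : ℝ) • A) = exp A := by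
  rw [← exp_add_smul, add_halves, one_smul]

theorem exp_smul_mul_mul_exp_smul (A P : 𝔸) (a b c : ℝ) :
    exp (a • A) * P * exp (b • A) =
      exp (c • A) * (exp ((a - c) • A) * P * exp ((b - c) • A)) * exp (c • A) := by
  rw [← add_sub_cancel c a, ← sub_add_cancel b c, exp_add_smul, exp_add_smul]
  simp only [add_sub_cancel_left, add_sub_cancel_right, mul_assoc]

/-- Duhamel's formula. -/
theorem exp_sub_exp_eq_integral (M N : 𝔸) :
    exp N - exp M = ∫ s in (0 : ℝ)..1, exp (s • N) * (N - M) * exp ((1 - s) • M) := by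
  have hderiv (s : ℝ) : HasDerivAt (fun u : ℝ => exp (u • N) * exp ((1 - u) • M))
      (exp (s • N) * (N - M) * exp ((1 - s) • M)) s := by
    have hM : HasDerivAt (fun u : ℝ => exp ((1 - u) • M)) (-(M * exp ((1 - s) • M))) s := by
      simpa [Function.comp_def] using (hasDerivAt_exp_smul_const' (𝕂 := ℝ) M (1 - s)).scomp s
        ((hasDerivAt_id s).const_sub 1)
    exact ((hasDerivAt_exp_smul_const (𝕂 := ℝ) N s).mul hM).congr_deriv (by noncomm_ring)
  have := continuous_exp_of_real (𝔸 := 𝔸)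
  rw [intervalIntegral.integral_eq_sub_of_hasDerivAt (fun s _ => hderiv s)
    (Continuous.intervalIntegrable (by fun_prop) 0 1)]
  simp

theorem hasDerivAt_exp_add_smul (A P : 𝔸) (t : ℝ) :
    HasDerivAt (fun u : ℝ => exp (A + u • P))
      (∫ s in (0 : ℝ)..1, exp (s • (A + t • P)) * P * exp ((1 - s) • (A + t • P))) t := by
  refine hasDerivAt_of_sub_eq_smul (G := fun u => ∫ s in (0 : ℝ)..1,
    exp (s • (A + u • P)) * P * exp ((1 - s) • (A + t • P))) ?_ fun u => ?_
  · have := continuous_exp_of_real (𝔸 := 𝔸)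
    exact (intervalIntegral.continuous_parametric_intervalIntegral_of_continuous'
      (by fun_prop) 0 1).continuousAt
  · rw [exp_sub_exp_eq_integral, ← intervalIntegral.integral_smul]
    congr 1 with s
    rw [add_sub_add_left_eq_sub, ← sub_smul, mul_smul_comm, smul_mul_assoc]

end BanachAlgebra

namespace Matrix

variable {m : Type*} [Fintype m] [DecidableEq m]

theorem norm_mul_mul_conjTranspose_apply_le {𝕜 : Type*} [RCLike 𝕜] (K X : Matrix m m 𝕜) (i : m) :
    ‖(K * X * Kᴴ) i i‖ ≤ ‖X‖ * RCLike.re ((K * Kᴴ) i i) := by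
  set v : EuclideanSpace 𝕜 m := WithLp.toLp 2 (star (K i))
  have hXK : (K * X * Kᴴ) i i = inner 𝕜 v (WithLp.toLp 2 (X *ᵥ star (K i))) := by
    rw [EuclideanSpace.inner_toLp_toLp, mul_apply, dotProduct_comm]
    simp only [dotProduct, mulVec, mul_apply, conjTranspose_apply, Pi.star_apply, Finset.sum_mul,
      Finset.mul_sum, mul_assoc, star_star]
    exact Finset.sum_comm
  have hK : RCLike.re ((K * Kᴴ) i i) = ‖v‖ ^ 2 := by
    rw [← inner_self_eq_norm_sq (𝕜 := 𝕜), EuclideanSpace.inner_toLp_toLp, mul_apply]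
    simp [dotProduct, mul_comm]
  calc ‖(K * X * Kᴴ) i i‖ ≤ ‖v‖ * ‖WithLp.toLp 2 (X *ᵥ star (K i))‖ :=
        hXK ▸ norm_inner_le_norm _ _
    _ ≤ ‖v‖ * (‖X‖ * ‖v‖) := by gcongr; exact l2_opNorm_mulVec X v
    _ = ‖X‖ * RCLike.re ((K * Kᴴ) i i) := by rw [hK]; ring

open scoped MatrixOrder in
theorem PosSemidef.norm_trace_mul_le {𝕜 : Type*} [RCLike 𝕜] {M : Matrix m m 𝕜}
    (hM : M.PosSemidef) (X : Matrix m m 𝕜) : ‖(M * X).trace‖ ≤ ‖X‖ * RCLike.re M.trace := by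
  obtain ⟨K, rfl⟩ := CStarAlgebra.nonneg_iff_eq_star_mul_self.mp hM.nonneg
  rw [star_eq_conjTranspose, Matrix.mul_assoc, trace_mul_comm, Matrix.mul_assoc,
    trace_mul_comm Kᴴ, trace, trace, map_sum, Finset.mul_sum]
  exact (norm_sum_le _ _).trans (Finset.sum_le_sum fun i _ =>
    by simpa [Matrix.mul_assoc] using norm_mul_mul_conjTranspose_apply_le K X i)

theorem IsHermitian.exp_smul {A : Matrix m m ℂ} (hA : A.IsHermitian) (r : ℝ) :
    (NormedSpace.exp (r • A)).IsHermitian :=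
  (hA.smul (IsSelfAdjoint.all r)).exp

theorem IsHermitian.trace_mul_exp_eq {A : Matrix m m ℂ} (hA : A.IsHermitian)
    (C : Matrix m m ℂ) :
    (C * NormedSpace.exp A).trace =
      ((NormedSpace.exp ((1 / 2 : ℝ) • A))ᴴ * C * NormedSpace.exp ((1 / 2 : ℝ) • A)).trace := by
  rw [(hA.exp_smul _).eq, trace_mul_comm _ (NormedSpace.exp ((1 / 2 : ℝ) • A)),
    ← Matrix.mul_assoc, exp_half_smul_mul_self, trace_mul_comm]

theorem PosDef.re_trace_mul_exp_pos [Nonempty m] {A C : Matrix m m ℂ} (hA : A.IsHermitian)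
    (hC : C.PosDef) : 0 < (C * exp A).trace.re := by
  rw [hA.trace_mul_exp_eq]
  exact (Complex.pos_iff.mp
    ((IsUnit.posDef_star_left_conjugate_iff (isUnit_exp _)).mpr hC).trace_pos).1

theorem PosSemidef.abs_re_trace_mul_exp_mul_exp_le {A C : Matrix m m ℂ} (hA : A.IsHermitian)
    (hC : C.PosSemidef) (P : Matrix m m ℂ) (s : ℝ) :
    |(C * (exp (s • A) * P * exp ((1 - s) • A))).trace.re| ≤
      ‖exp ((s - 1 / 2) • A) * P * exp ((1 / 2 - s) • A)‖ * (C * exp A).trace.re := by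
  set B := exp ((1 / 2 : ℝ) • A)
  set X := exp ((s - 1 / 2) • A) * P * exp ((1 / 2 - s) • A)
  have hconj : (C * (B * X * B)).trace = (Bᴴ * C * B * X).trace := by
    rw [show Bᴴ = B from (hA.exp_smul _).eq, trace_mul_comm, Matrix.mul_assoc, trace_mul_comm]
    simp only [Matrix.mul_assoc]
  rw [exp_smul_mul_mul_exp_smul A P s (1 - s) (1 / 2), show 1 - s - 1 / 2 = 1 / 2 - s by ring,
    hA.trace_mul_exp_eq, hconj]
  exact (Complex.abs_re_le_norm _).trans ((hC.conjTranspose_mul_mul_same B).norm_trace_mul_le X)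

theorem hasDerivAt_re_trace_mul_exp_add_smul (C H P : Matrix m m ℂ) (t : ℝ) :
    HasDerivAt (fun u : ℝ => (C * exp (H + u • P)).trace.re)
      (∫ s in (0 : ℝ)..1,
        (C * (exp (s • (H + t • P)) * P * exp ((1 - s) • (H + t • P)))).trace.re) t := by
  let T : Matrix m m ℂ →L[ℝ] ℝ := Complex.reCLM ∘L LinearMap.toContinuousLinearMap
    ((traceLinearMap m ℂ ℂ).restrictScalars ℝ ∘ₗ LinearMap.mulLeft ℝ C)
  have := continuous_exp_of_real (𝔸 := Matrix m m ℂ)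
  have hT := T.hasFDerivAt.comp_hasDerivAt t (hasDerivAt_exp_add_smul H P t)
  rwa [← T.intervalIntegral_comp_comm (Continuous.intervalIntegrable (by fun_prop) 0 1)] at hT

end Matrix

/-- Pointwise derivative bound in the proof of part 2 of Lemma 3.3: for Hermitian `H, P` and
positive definite `C`, `|d/dt log tr(C e^{H+tP})| ≤ sup_{-1/2≤s≤1/2} ‖e^{-s(H+tP)} P e^{s(H+tP)}‖`. -/
theorem abs_deriv_log_trace_le {n : ℕ} (hn : 1 ≤ n)
    (H P C : Matrix (Fin n) (Fin n) ℂ) (hH : H.IsHermitian) (hP : P.IsHermitian)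
    (hC : C.PosDef) (t : ℝ) :
    |deriv (fun t : ℝ => Real.log (Matrix.trace (C * NormedSpace.exp (H + t • P))).re) t| ≤
      ⨆ s : Set.Icc (-(1/2) : ℝ) (1/2),
        ‖NormedSpace.exp ((-(s : ℝ)) • (H + t • P)) * P *
          NormedSpace.exp ((s : ℝ) • (H + t • P))‖ := by
  set A := H + t • P
  have hA : A.IsHermitian := hH.add (hP.smul (IsSelfAdjoint.all t))
  have : Nonempty (Fin n) := ⟨⟨0, hn⟩⟩
  have hpos : 0 < (C * exp A).trace.re := hC.re_trace_mul_exp_pos hA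
  have hbdd : BddAbove (Set.range fun s : Set.Icc (-(1 / 2) : ℝ) (1 / 2) =>
      ‖exp (-(s : ℝ) • A) * P * exp ((s : ℝ) • A)‖) := by
    have := continuous_exp_of_real (𝔸 := Matrix (Fin n) (Fin n) ℂ)
    exact (isCompact_range (by fun_prop)).bddAbove
  rw [((Matrix.hasDerivAt_re_trace_mul_exp_add_smul C H P t).log hpos.ne').deriv, abs_div,
    abs_of_pos hpos, div_le_iff₀ hpos, ← Real.norm_eq_abs]
  refine (intervalIntegral.norm_integral_le_of_norm_le_const fun s hs => ?_).trans_eq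
    (by rw [sub_zero, abs_one, mul_one])
  refine (hC.posSemidef.abs_re_trace_mul_exp_mul_exp_le hA P s).trans
    (mul_le_mul_of_nonneg_right ?_ hpos.le)
  rw [Set.uIoc_of_le zero_le_one] at hs
  refine le_ciSup_of_le hbdd ⟨1 / 2 - s, by constructor <;> linarith [hs.1, hs.2]⟩ ?_
  rw [neg_sub]
end

section
/- Fix $d \ge 1$ and let $w$ be a function from the finite subsets of $\mathbb{Z}^d$ to the nonnegative reals that is translation invariant, i.e., $w(X + x) = w(X)$ for every finite $X \subset \mathbb{Z}^d$ and every $x \in \mathbb{Z}^d$ (where $X + x = \{ y + x : y \in X \}$), and summable in the sense that the family $\{ w(X) : X \text{ finite}, \, 0 \in X \}$ is summable with sum $S < \infty$. For $a \ge 1$ let $\Delta_a = \{0, 1, \dots, a-1\}^d \subset \mathbb{Z}^d$. Then $\lim_{a \to \infty} \frac{1}{a^d} \sum_{X : \, X \cap \Delta_a \ne \emptyset, \; X \not\subset \Delta_a} w(X) = 0$, the sum being over finite subsets $X$ of $\mathbb{Z}^d$ that meet both $\Delta_a$ and its complement (this family is summable, being dominated by $a^d S$). -/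
/-!
Choosing a point `x ∈ X ∩ Δ` and translating, every set `X` crossing the boundary of a finite
set `Δ` is `Y + x` with `0 ∈ Y`, `x ∈ Δ` and `Y + x ⊄ Δ`, and `X ↦ (Y, x)` is injective. By
translation invariance the boundary weight is therefore at most `∑_{Y ∋ 0} w(Y) N(Y)`, where
`N(Y)` counts the `x ∈ Δ` with `Y + x ⊄ Δ`. For the cube `Δ_a` and `Y ⊆ [-R, R]^d`, only the
`x` within distance `R` of the complement count, so `N(Y) ≤ a^d - (a - 2R)^d = o(a^d)`.
Since also `N(Y) ≤ a^d`, dominated convergence for the sum over `Y` gives the limit.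
-/

open Filter Finset Topology

section Translation

variable {G : Type*} [AddCommGroup G] [DecidableEq G]

def exitCount (Δ Y : Finset G) : ℕ := #{x ∈ Δ | ¬ Y.image (· + x) ⊆ Δ}

lemma exitCount_le_card (Δ Y : Finset G) : exitCount Δ Y ≤ #Δ := card_filter_le _ _

lemma image_add_neg_image_add (X : Finset G) (x : G) : (X.image (· + -x)).image (· + x) = X := by
  rw [image_image]
  convert image_id (s := X)
  funext y
  simp

theorem tsum_crossing_le_tsum_mul_exitCount (w : Finset G → ℝ) (hw0 : ∀ X, 0 ≤ w X)
    (hwt : ∀ (X : Finset G) (x : G), w (X.image (· + x)) = w X)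
    (hsum : Summable fun Y : {Y : Finset G // 0 ∈ Y} => w Y) (Δ : Finset G) :
    ∑' X : {X : Finset G // (X ∩ Δ).Nonempty ∧ ¬ X ⊆ Δ}, w X ≤
      ∑' Y : {Y : Finset G // 0 ∈ Y}, w Y * exitCount Δ Y := by
  let g : {Y : Finset G // 0 ∈ Y} × Δ → ℝ := fun p =>
    if p.1.1.image (· + p.2.1) ⊆ Δ then 0 else w p.1
  have hg0 : ∀ p, 0 ≤ g p := fun p => by dsimp only [g]; split_ifs <;> simp [hw0]
  have hg_fiber : ∀ Y, ∑' x : Δ, g (Y, x) = w Y * exitCount Δ Y := fun Y => by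
    rw [tsum_fintype, exitCount, card_filter, Nat.cast_sum, mul_sum, ← sum_coe_sort Δ]
    refine sum_congr rfl fun x _ => ?_
    dsimp only [g]
    split_ifs <;> simp
  have hg_sum : Summable g := by
    refine (summable_prod_of_nonneg hg0).2 ⟨fun _ => .of_finite, ?_⟩
    refine .of_nonneg_of_le (fun _ => tsum_nonneg fun _ => hg0 _) (fun Y => ?_)
      (hsum.mul_right (#Δ : ℝ))
    rw [hg_fiber]
    exact mul_le_mul_of_nonneg_left (by exact_mod_cast exitCount_le_card Δ Y) (hw0 Y)
  choose p hp using fun X : {X : Finset G // (X ∩ Δ).Nonempty ∧ ¬ X ⊆ Δ} => X.2.1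
  let i : {X : Finset G // (X ∩ Δ).Nonempty ∧ ¬ X ⊆ Δ} → {Y : Finset G // 0 ∈ Y} × Δ :=
    fun X => (⟨X.1.image (· + -p X), mem_image.2 ⟨p X, (mem_inter.1 (hp X)).1, add_neg_cancel _⟩⟩,
      ⟨p X, (mem_inter.1 (hp X)).2⟩)
  have hi : Function.Injective i := fun X X' h => by
    have h1 := congrArg (fun q => q.1.1.image (· + q.2.1)) h
    simpa only [i, image_add_neg_image_add, Subtype.ext_iff] using h1
  have hgi : ∀ X, g (i X) = w X := fun X => by
    simp only [g, i, image_add_neg_image_add, X.2.2, if_false, hwt]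
  calc ∑' X : {X : Finset G // (X ∩ Δ).Nonempty ∧ ¬ X ⊆ Δ}, w X
      = ∑' X, g (i X) := by simp only [hgi]
    _ ≤ ∑' q, g q := tsum_comp_le_tsum_of_inj hg_sum hg0 hi
    _ = ∑' Y : {Y : Finset G // 0 ∈ Y}, w Y * exitCount Δ Y := by
      rw [hg_sum.tsum_prod' fun Y => .of_finite]
      exact tsum_congr hg_fiber

end Translation

section Cube

variable {d : ℕ}

noncomputable def cube (d a : ℕ) : Finset (Fin d → ℤ) := Fintype.piFinset fun _ => Ico 0 (a : ℤ)

lemma card_cube (d a : ℕ) : #(cube d a) = a ^ d := by simp [cube]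

lemma exitCount_cube_le (Y : Finset (Fin d → ℤ)) {R : ℕ} (hR : ∀ y ∈ Y, ∀ i, |y i| ≤ R)
    (a : ℕ) : exitCount (cube d a) Y ≤ a ^ d - (a - 2 * R) ^ d := by
  let inner : Finset (Fin d → ℤ) := Fintype.piFinset fun _ => Ico (R : ℤ) (a - R)
  have h_inner : inner ⊆ cube d a :=
    Fintype.piFinset_subset _ _ fun _ => Ico_subset_Ico (by positivity) (by omega)
  have h_card : #inner = (a - 2 * R) ^ d := by
    simp only [inner, Fintype.card_piFinset, Int.card_Ico, prod_const, card_univ, Fintype.card_fin]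
    congr 1
    omega
  have h_exit : {x ∈ cube d a | ¬ Y.image (· + x) ⊆ cube d a} ⊆ cube d a \ inner := by
    refine fun x hx => mem_sdiff.2 ⟨(mem_filter.1 hx).1, fun hx_inner => (mem_filter.1 hx).2 ?_⟩
    intro z hz
    obtain ⟨y, hy, rfl⟩ := mem_image.1 hz
    simp only [cube, inner, Fintype.mem_piFinset, mem_Ico] at hx_inner ⊢
    intro i
    have := abs_le.1 (hR y hy i)
    have := hx_inner i
    simp only [Pi.add_apply]
    omega
  calc exitCount (cube d a) Y ≤ #(cube d a \ inner) := card_le_card h_exit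
    _ = a ^ d - (a - 2 * R) ^ d := by rw [card_sdiff_of_subset h_inner, card_cube, h_card]

lemma tendsto_exitCount_cube_div_pow (Y : Finset (Fin d → ℤ)) :
    Tendsto (fun a : ℕ => (exitCount (cube d a) Y : ℝ) / a ^ d) atTop (𝓝 0) := by
  obtain ⟨R, hR⟩ : ∃ R : ℕ, ∀ y ∈ Y, ∀ i, |y i| ≤ R := by
    obtain ⟨R, hR⟩ := (Y.biUnion fun y => univ.image fun i => (y i).natAbs).exists_le
    refine ⟨R, fun y hy i => ?_⟩
    have := hR _ (mem_biUnion.2 ⟨y, hy, mem_image_of_mem _ (mem_univ i)⟩)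
    rw [Int.abs_eq_natAbs]
    exact_mod_cast this
  have h_lim : Tendsto (fun a : ℕ => 1 - (1 - 2 * (R : ℝ) / a) ^ d) atTop (𝓝 0) := by
    simpa using
      (((tendsto_const_div_atTop_nhds_zero_nat (2 * (R : ℝ))).const_sub 1).pow d).const_sub 1
  refine squeeze_zero' (.of_forall fun a => by positivity) ?_ h_lim
  filter_upwards [eventually_ge_atTop (max 1 (2 * R))] with a ha
  have ha0 : (0 : ℝ) < a := by exact_mod_cast (le_max_left _ _).trans ha
  have h2R : 2 * R ≤ a := (le_max_right _ _).trans ha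
  calc (exitCount (cube d a) Y : ℝ) / a ^ d ≤ ((a ^ d - (a - 2 * R) ^ d : ℕ) : ℝ) / a ^ d := by
        gcongr
        exact_mod_cast exitCount_cube_le Y hR a
    _ = 1 - (1 - 2 * (R : ℝ) / a) ^ d := by
        rw [Nat.cast_sub (Nat.pow_le_pow_left (Nat.sub_le a (2 * R)) d)]
        push_cast [h2R]
        rw [one_sub_div ha0.ne', div_pow, sub_div, div_self (by positivity)]

lemma exitCount_cube_div_pow_le_one (Y : Finset (Fin d → ℤ)) (a : ℕ) :
    (exitCount (cube d a) Y : ℝ) / a ^ d ≤ 1 :=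
  div_le_one_of_le₀ (by exact_mod_cast card_cube d a ▸ exitCount_le_card _ Y) (by positivity)

end Cube

theorem boundary_weight_tendsto_zero_general (d : ℕ)
    (w : Finset (Fin d → ℤ) → ℝ) (hw_nonneg : ∀ X, 0 ≤ w X)
    (hw_transl : ∀ (X : Finset (Fin d → ℤ)) (x : Fin d → ℤ),
      w (X.image (fun y => y + x)) = w X)
    (S : ℝ)
    (hsum : HasSum (fun X : {X : Finset (Fin d → ℤ) // (0 : Fin d → ℤ) ∈ X} => w X) S) :
    Filter.Tendsto
      (fun a : ℕ =>
        (1 / (a : ℝ) ^ d) *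
          ∑' X : {X : Finset (Fin d → ℤ) //
              (X ∩ Fintype.piFinset (fun _ : Fin d => Finset.Ico (0 : ℤ) (a : ℤ))).Nonempty ∧
              ¬ X ⊆ Fintype.piFinset (fun _ : Fin d => Finset.Ico (0 : ℤ) (a : ℤ))}, w X)
      Filter.atTop (nhds 0) := by
  change Tendsto (fun a : ℕ => 1 / (a : ℝ) ^ d *
    ∑' X : {X // (X ∩ cube d a).Nonempty ∧ ¬ X ⊆ cube d a}, w X) atTop (𝓝 0)
  have h_dom : Tendsto (fun a : ℕ => ∑' Y : {Y : Finset (Fin d → ℤ) // 0 ∈ Y},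
      w Y * ((exitCount (cube d a) Y : ℝ) / a ^ d)) atTop (𝓝 0) := by
    simpa using tendsto_tsum_of_dominated_convergence hsum.summable
      (fun Y => (tendsto_exitCount_cube_div_pow Y.1).const_mul (w Y))
      (.of_forall fun a Y => by
        rw [norm_mul, Real.norm_of_nonneg (hw_nonneg _), Real.norm_of_nonneg (by positivity)]
        exact mul_le_of_le_one_right (hw_nonneg _) (exitCount_cube_div_pow_le_one Y.1 a))
  refine squeeze_zero (fun a => mul_nonneg (by positivity) (tsum_nonneg fun X => hw_nonneg X))
    (fun a => ?_) h_dom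
  calc 1 / (a : ℝ) ^ d * ∑' X : {X // (X ∩ cube d a).Nonempty ∧ ¬ X ⊆ cube d a}, w X
      ≤ 1 / (a : ℝ) ^ d * ∑' Y : {Y : Finset (Fin d → ℤ) // 0 ∈ Y}, w Y * exitCount (cube d a) Y :=
        by gcongr; exact tsum_crossing_le_tsum_mul_exitCount w hw_nonneg hw_transl hsum.summable _
    _ = ∑' Y : {Y : Finset (Fin d → ℤ) // 0 ∈ Y}, w Y * ((exitCount (cube d a) Y : ℝ) / a ^ d) := by
        rw [← tsum_mul_left]
        congr 1
        funext Y
        ring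

/-- Boundary-term estimate (3.46): if `w` is a translation-invariant nonnegative weight on
finite subsets of `ℤ^d` that is summable over the sets containing the origin, then the total
weight of the sets crossing the boundary of the cube `Δ_a = {0, …, a-1}^d` is `o(a^d)`. -/
theorem boundary_weight_tendsto_zero (d : ℕ) (hd : 1 ≤ d)
    (w : Finset (Fin d → ℤ) → ℝ) (hw_nonneg : ∀ X, 0 ≤ w X)
    (hw_transl : ∀ (X : Finset (Fin d → ℤ)) (x : Fin d → ℤ),
      w (X.image (fun y => y + x)) = w X)
    (S : ℝ)
    (hsum : HasSum (fun X : {X : Finset (Fin d → ℤ) // (0 : Fin d → ℤ) ∈ X} => w X) S) :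
    Filter.Tendsto
      (fun a : ℕ =>
        (1 / (a : ℝ) ^ d) *
          ∑' X : {X : Finset (Fin d → ℤ) //
              (X ∩ Fintype.piFinset (fun _ : Fin d => Finset.Ico (0 : ℤ) (a : ℤ))).Nonempty ∧
              ¬ X ⊆ Fintype.piFinset (fun _ : Fin d => Finset.Ico (0 : ℤ) (a : ℤ))}, w X)
      Filter.atTop (nhds 0) :=
  boundary_weight_tendsto_zero_general d w hw_nonneg hw_transl S hsum
end
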